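/- arXiv:2205.01158 — 2 statements merged into one kernel-verified Lean document; each statement's English description precedes it below -/
import Mathlib

section
/- Every homogeneous polynomial P ∈ ℝ[x_1, …, x_n] of degree m admits a decomposition P = ∑_{j=0}^{⌊m/2⌋} (x_1² + ⋯ + x_n²)^j · H_j, where each H_j ∈ ℝ[x_1, …, x_n] is a harmonic homogeneous polynomial of degree m − 2j (harmonic meaning ΔH_j = 0, where Δ = ∑_{i=1}^n ∂²/∂x_i² is the Laplacian). Moreover this decomposition is unique: the polynomials H_j are uniquely determined by P. (Consequently, on the unit sphere, the space of degree-m homogeneous polynomials equals the direct sum of the restricted spaces of harmonic homogeneous polynomials of degrees m, m−2, m−4, ….) -/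
open scoped BigOperators
open MvPolynomial

/-- The (formal) Laplacian `ΔQ = ∑ i, ∂²Q/∂x_i²` of a multivariate polynomial. -/
noncomputable def polyLaplacian {n : ℕ} (Q : MvPolynomial (Fin n) ℝ) :
    MvPolynomial (Fin n) ℝ :=
  ∑ i, pderiv i (pderiv i Q)

/-!
Write `r² = x₁² + ⋯ + xₙ²`. Euler's identity gives `Δ(r² q) = r² Δq + (2n + 4d) q` for `q`
homogeneous of degree `d`, hence `Δ(r^{2(j+1)} h) = 2(j+1)(n + 2d + 2j) r^{2j} h` for `h` harmonic
homogeneous of degree `d`, a nonzero multiple since `n ≥ 1`. So `Δ` sends a decomposition in degree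
`m + 2` to one in degree `m`, with indices shifted down by one and components rescaled.
Existence then follows by induction on `m`: decompose `ΔP`, divide its components by these factors
to get `H₁, H₂, …`, and put `H₀ = P - ∑_{j ≥ 1} r^{2j} H_j`, harmonic by construction.
Uniqueness is the same induction: applying `Δ` to a vanishing decomposition kills `H₀` and leaves a
vanishing decomposition of degree `m`, so `H₁ = H₂ = ⋯ = 0`, and then `H₀ = 0`.
-/

open Finset

namespace MvPolynomial

section Laplacian

variable {σ R : Type*} [CommSemiring R]

lemma pderiv_eq_zero_of_isHomogeneous_zero {p : MvPolynomial σ R} (hp : p.IsHomogeneous 0)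
    (i : σ) : pderiv i p = 0 := by
  rw [← totalDegree_zero_iff_isHomogeneous, totalDegree_eq_zero_iff_eq_C] at hp
  rw [hp, pderiv_C]

variable [Fintype σ]

noncomputable def laplacian : MvPolynomial σ R →ₗ[R] MvPolynomial σ R :=
  ∑ i, (pderiv i).toLinearMap ∘ₗ (pderiv i).toLinearMap

lemma laplacian_apply (p : MvPolynomial σ R) : laplacian p = ∑ i, pderiv i (pderiv i p) := by
  simp [laplacian, LinearMap.sum_apply]

noncomputable def sumXSq : MvPolynomial σ R := ∑ i, X i ^ 2

lemma isHomogeneous_sumXSq : (sumXSq : MvPolynomial σ R).IsHomogeneous 2 :=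
  IsHomogeneous.sum _ _ _ fun i _ => isHomogeneous_X_pow i 2

lemma pderiv_sumXSq (i : σ) : pderiv i (sumXSq : MvPolynomial σ R) = 2 * X i := by
  classical
  simp [sumXSq, pderiv_X, Pi.single_apply]

lemma isHomogeneous_laplacian {p : MvPolynomial σ R} {m : ℕ} (hp : p.IsHomogeneous m) :
    (laplacian p).IsHomogeneous (m - 2) := by
  rw [laplacian_apply]
  exact IsHomogeneous.sum _ _ _ fun i _ => by simpa [Nat.sub_sub] using hp.pderiv.pderiv (i := i)

lemma IsHomogeneous.laplacian_eq_zero_of_le_one {p : MvPolynomial σ R} {m : ℕ}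
    (hp : p.IsHomogeneous m) (hm : m ≤ 1) : laplacian p = 0 := by
  rw [laplacian_apply]
  refine sum_eq_zero fun i _ => pderiv_eq_zero_of_isHomogeneous_zero ?_ i
  simpa [show m - 1 = 0 by omega] using hp.pderiv (i := i)

lemma IsHomogeneous.laplacian_sumXSq_mul {p : MvPolynomial σ R} {d : ℕ}
    (hp : p.IsHomogeneous d) :
    laplacian (sumXSq * p) = sumXSq * laplacian p + (2 * Fintype.card σ + 4 * d) • p := by
  have hi : ∀ i, pderiv i (pderiv i (sumXSq * p)) =
      sumXSq * pderiv i (pderiv i p) + 4 * (X i * pderiv i p) + 2 * p := by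
    intro i
    have h2 : pderiv i (2 : MvPolynomial σ R) = 0 := by exact_mod_cast (pderiv i).map_natCast 2
    simp only [pderiv_mul, map_add, pderiv_sumXSq, pderiv_X_self, h2]
    ring
  simp only [laplacian_apply, hi, sum_add_distrib, ← mul_sum, hp.sum_X_mul_pderiv, sum_const,
    card_univ]
  simp only [nsmul_eq_mul]
  push_cast
  ring

lemma IsHomogeneous.sumXSq_pow_mul {p : MvPolynomial σ R} {d : ℕ} (hp : p.IsHomogeneous d)
    (j : ℕ) : (sumXSq ^ j * p).IsHomogeneous (2 * j + d) :=
  (isHomogeneous_sumXSq.pow j).mul hp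

def laplacianFactor (n d j : ℕ) : ℕ := 2 * (j + 1) * (n + 2 * d + 2 * j)

lemma IsHomogeneous.laplacian_sumXSq_pow_succ_mul {p : MvPolynomial σ R} {d : ℕ}
    (hp : p.IsHomogeneous d) (hΔ : laplacian p = 0) (j : ℕ) :
    laplacian (sumXSq ^ (j + 1) * p) =
      laplacianFactor (Fintype.card σ) d j • (sumXSq ^ j * p) := by
  induction j with
  | zero =>
    rw [pow_one, hp.laplacian_sumXSq_mul, hΔ, mul_zero, zero_add, pow_zero, one_mul,
      laplacianFactor]
    ring_nf
  | succ j ih =>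
    rw [pow_succ', mul_assoc, (hp.sumXSq_pow_mul _).laplacian_sumXSq_mul, ih, mul_smul_comm,
      ← mul_assoc, ← pow_succ', ← add_smul, laplacianFactor, laplacianFactor]
    congr 1
    ring

variable (σ R) in
noncomputable def harmonicSubmodule (d : ℕ) : Submodule R (MvPolynomial σ R) :=
  homogeneousSubmodule σ R d ⊓ LinearMap.ker laplacian

lemma mem_harmonicSubmodule {d : ℕ} {p : MvPolynomial σ R} :
    p ∈ harmonicSubmodule σ R d ↔ p.IsHomogeneous d ∧ laplacian p = 0 := Iff.rfl

lemma laplacian_sum_sumXSq_pow_succ_mul {k : ℕ} {H : ℕ → MvPolynomial σ R}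
    (hH : ∀ j ≤ k / 2, H j ∈ harmonicSubmodule σ R (k - 2 * j)) :
    laplacian (∑ j ∈ range (k / 2 + 1), sumXSq ^ (j + 1) * H j) =
      ∑ j ∈ range (k / 2 + 1),
        sumXSq ^ j * ((laplacianFactor (Fintype.card σ) (k - 2 * j) j : R) • H j) := by
  rw [map_sum]
  refine sum_congr rfl fun j hj => ?_
  obtain ⟨hhom, hΔ⟩ := hH j (Nat.lt_succ_iff.mp (mem_range.mp hj))
  rw [hhom.laplacian_sumXSq_pow_succ_mul hΔ, mul_smul_comm, Nat.cast_smul_eq_nsmul]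

end Laplacian

section Decomposition

variable {σ K : Type*} [Fintype σ] [Nonempty σ] [Field K] [CharZero K]

variable (σ K) in
lemma laplacianFactor_ne_zero (d j : ℕ) : (laplacianFactor (Fintype.card σ) d j : K) ≠ 0 := by
  have := Fintype.card_pos (α := σ)
  exact Nat.cast_ne_zero.mpr (by unfold laplacianFactor; positivity)

theorem exists_harmonic_decomposition (m : ℕ) (P : MvPolynomial σ K) (hP : P.IsHomogeneous m) :
    ∃ H : ℕ → MvPolynomial σ K, (∀ j ≤ m / 2, H j ∈ harmonicSubmodule σ K (m - 2 * j)) ∧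
      P = ∑ j ∈ range (m / 2 + 1), sumXSq ^ j * H j := by
  induction m using Nat.strong_induction_on generalizing P with
  | _ m ih =>
  rcases lt_or_ge m 2 with hm | hm
  · refine ⟨fun _ => P, fun j hj => ?_, ?_⟩
    · obtain rfl : j = 0 := by omega
      exact ⟨by simpa using hP, hP.laplacian_eq_zero_of_le_one (by omega)⟩
    · simp [show m / 2 = 0 by omega]
  obtain ⟨k, rfl⟩ : ∃ k, m = k + 2 := ⟨m - 2, by omega⟩
  obtain ⟨G, hG, hPG⟩ := ih k (by omega) (laplacian P) (by simpa using isHomogeneous_laplacian hP)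
  set T : ℕ → MvPolynomial σ K :=
    fun j => (laplacianFactor (Fintype.card σ) (k - 2 * j) j : K)⁻¹ • G j
  have hT : ∀ j ≤ k / 2, T j ∈ harmonicSubmodule σ K (k - 2 * j) :=
    fun j hj => Submodule.smul_mem _ _ (hG j hj)
  set tail := ∑ j ∈ range (k / 2 + 1), sumXSq ^ (j + 1) * T j
  have hΔtail : laplacian tail = laplacian P := by
    rw [laplacian_sum_sumXSq_pow_succ_mul hT, hPG]
    refine sum_congr rfl fun j _ => ?_
    rw [smul_smul, mul_inv_cancel₀ (laplacianFactor_ne_zero σ K _ _), one_smul]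
  have hdiv : (k + 2) / 2 = k / 2 + 1 := by omega
  refine ⟨fun j => match j with | 0 => P - tail | j + 1 => T j, fun j hj => ?_, ?_⟩
  · rcases j with _ | j
    · refine ⟨hP.sub (IsHomogeneous.sum _ _ _ fun j hj => ?_),
        show laplacian (P - tail) = 0 by rw [map_sub, hΔtail, sub_self]⟩
      have hj' := Nat.lt_succ_iff.mp (mem_range.mp hj)
      have := (hT j hj').1.sumXSq_pow_mul (j + 1)
      rwa [show 2 * (j + 1) + (k - 2 * j) = k + 2 by omega] at this
    · rw [show k + 2 - 2 * (j + 1) = k - 2 * j by omega]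
      exact hT j (by omega)
  · rw [hdiv, sum_range_succ', pow_zero, one_mul, add_sub_cancel]

theorem eq_zero_of_harmonic_decomposition_eq_zero (m : ℕ) (H : ℕ → MvPolynomial σ K)
    (hH : ∀ j ≤ m / 2, H j ∈ harmonicSubmodule σ K (m - 2 * j))
    (hsum : ∑ j ∈ range (m / 2 + 1), sumXSq ^ j * H j = 0) : ∀ j ≤ m / 2, H j = 0 := by
  induction m using Nat.strong_induction_on generalizing H with
  | _ m ih =>
  rcases lt_or_ge m 2 with hm | hm
  · intro j hj
    obtain rfl : j = 0 := by omega
    simpa [show m / 2 = 0 by omega] using hsum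
  obtain ⟨k, rfl⟩ : ∃ k, m = k + 2 := ⟨m - 2, by omega⟩
  have hdiv : (k + 2) / 2 = k / 2 + 1 := by omega
  have hshift : ∀ j ≤ k / 2, H (j + 1) ∈ harmonicSubmodule σ K (k - 2 * j) := fun j hj => by
    simpa [show k + 2 - 2 * (j + 1) = k - 2 * j by omega] using hH (j + 1) (by omega)
  rw [hdiv, sum_range_succ', pow_zero, one_mul] at hsum
  have hΔ := congrArg laplacian hsum
  rw [map_add, laplacian_sum_sumXSq_pow_succ_mul hshift, (hH 0 (by omega)).2, add_zero,
    map_zero] at hΔ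
  have htail : ∀ j ≤ k / 2, H (j + 1) = 0 := fun j hj => by
    refine (smul_eq_zero.mp ?_).resolve_left (laplacianFactor_ne_zero σ K (k - 2 * j) j)
    exact ih k (by omega) _ (fun j hj => Submodule.smul_mem _ _ (hshift j hj)) hΔ j hj
  rw [sum_eq_zero fun j hj => by rw [htail j (Nat.lt_succ_iff.mp (mem_range.mp hj)), mul_zero],
    zero_add] at hsum
  rintro (_ | j) hj
  · exact hsum
  · exact htail j (by omega)

theorem eq_of_harmonic_decomposition_eq {m : ℕ} {H G : ℕ → MvPolynomial σ K}
    (hH : ∀ j ≤ m / 2, H j ∈ harmonicSubmodule σ K (m - 2 * j))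
    (hG : ∀ j ≤ m / 2, G j ∈ harmonicSubmodule σ K (m - 2 * j))
    (h : ∑ j ∈ range (m / 2 + 1), sumXSq ^ j * H j = ∑ j ∈ range (m / 2 + 1), sumXSq ^ j * G j) :
    ∀ j ≤ m / 2, H j = G j := by
  refine fun j hj => sub_eq_zero.mp (eq_zero_of_harmonic_decomposition_eq_zero m (H - G)
    (fun j hj => Submodule.sub_mem _ (hH j hj) (hG j hj)) ?_ j hj)
  simp only [Pi.sub_apply, mul_sub, sum_sub_distrib, h, sub_self]

end Decomposition

end MvPolynomial

/-- every homogeneous polynomial `P` of degree `m` in `n`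
variables decomposes uniquely as `P = ∑_{j=0}^{⌊m/2⌋} (x₁²+⋯+x_n²)^j · H_j`
with each `H_j` a harmonic homogeneous polynomial of degree `m - 2j`. -/
theorem harmonic_decomposition (n m : ℕ) (hn : 1 ≤ n)
    (P : MvPolynomial (Fin n) ℝ) (hP : P.IsHomogeneous m) :
    ∃! H : Fin (m / 2 + 1) → MvPolynomial (Fin n) ℝ,
      (∀ j, (H j).IsHomogeneous (m - 2 * (j : ℕ)) ∧ polyLaplacian (H j) = 0) ∧
      P = ∑ j : Fin (m / 2 + 1), (∑ i, (X i : MvPolynomial (Fin n) ℝ) ^ 2) ^ (j : ℕ) * H j := by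
  have : Nonempty (Fin n) := ⟨⟨0, hn⟩⟩
  simp only [polyLaplacian, ← laplacian_apply, ← mem_harmonicSubmodule, ← sumXSq.eq_1]
  obtain ⟨G, hG, hPG⟩ := exists_harmonic_decomposition m P hP
  refine ⟨fun j => G j, ⟨fun j => hG j (Nat.lt_succ_iff.mp j.isLt), ?_⟩, ?_⟩
  · rw [hPG, Fin.sum_univ_eq_sum_range (fun j => sumXSq ^ j * G j)]
  rintro H ⟨hH, hPH⟩
  have hext : ∀ j : Fin (m / 2 + 1), Function.extend Fin.val H 0 j = H j :=
    Fin.val_injective.extend_apply H 0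
  funext j
  rw [← hext j]
  refine eq_of_harmonic_decomposition_eq (fun i hi => ?_) hG ?_ j (Nat.lt_succ_iff.mp j.isLt)
  · exact hext ⟨i, Nat.lt_succ_iff.mpr hi⟩ ▸ hH _
  · rw [← hPG, ← Fin.sum_univ_eq_sum_range (fun j => sumXSq ^ j * Function.extend Fin.val H 0 j)]
    simpa only [hext] using hPH.symm
end

section
/- Let y_1, …, y_n be unit vectors in ℝ^{d+1} such that for all i ≠ j, |⟨y_i, y_j⟩| < 1 (equivalently, y_i ≠ y_j and y_i ≠ −y_j). Then there exists a positive integer M such that for every m ≥ M, the functions t ↦ ⟨y_1, t⟩^{2m}, …, t ↦ ⟨y_n, t⟩^{2m}, regarded as real-valued functions on the unit sphere S^d, are linearly independent: if a_1, …, a_n ∈ ℝ satisfy ∑_{i=1}^n a_i ⟨y_i, t⟩^{2m} = 0 for all t ∈ S^d, then a_1 = ⋯ = a_n = 0. -/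
open scoped BigOperators

/-- let `y₁, …, y_n` be unit vectors in `ℝ^{d+1}` with
`|⟨y_i, y_j⟩| < 1` for `i ≠ j` (distinct points of projective space). Then for
all sufficiently large `m` the functions `t ↦ ⟨y_i, t⟩^{2m}` on the unit
sphere `S^d` are linearly independent. -/
theorem powers_of_inner_products_eventually_linearIndependent
    (d n : ℕ) (hd : 1 ≤ d) (y : Fin n → Fin (d+1) → ℝ)
    (hunit : ∀ i, ∑ k, y i k ^ 2 = 1)
    (hsep : ∀ i j, i ≠ j → |∑ k, y i k * y j k| < 1) :
    ∃ M : ℕ, 0 < M ∧ ∀ m : ℕ, M ≤ m →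
      ∀ a : Fin n → ℝ,
        (∀ t : Fin (d+1) → ℝ, (∑ i, t i ^ 2 = 1) →
          ∑ i, a i * (∑ k, y i k * t k) ^ (2 * m) = 0) →
        ∀ i, a i = 0 := by
  classical
  set ε : ℝ := 1 / (2 * (n + 1)) with hεdef
  have hεpos : 0 < ε := by positivity
  have hN : ∀ p : Fin n × Fin n, ∃ N : ℕ, ∀ m, N ≤ m →
      p.1 ≠ p.2 → |∑ k, y p.1 k * y p.2 k| ^ (2 * m) ≤ ε := by
    intro p
    by_cases hp : p.1 = p.2
    · exact ⟨0, fun m _ h => absurd hp h⟩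
    · set c := |∑ k, y p.1 k * y p.2 k| with hc
      have hc0 : 0 ≤ c := abs_nonneg _
      have hc1 : c < 1 := hsep _ _ hp
      have htend := tendsto_pow_atTop_nhds_zero_of_lt_one hc0 hc1
      obtain ⟨N, hNs⟩ := Filter.eventually_atTop.mp
        (htend.eventually (gt_mem_nhds hεpos))
      refine ⟨N, fun m hm _ => ?_⟩
      have h1 : c ^ (2 * m) ≤ c ^ m :=
        pow_le_pow_of_le_one hc0 hc1.le (by omega)
      exact h1.trans (hNs m hm).le
  choose N hNspec using hN
  refine ⟨Finset.univ.sup N + 1, Nat.succ_pos _, fun m hm a ha i => ?_⟩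
  obtain ⟨i₀, -, hmax⟩ := Finset.exists_max_image Finset.univ
    (fun j => |a j|) ⟨i, Finset.mem_univ i⟩
  have hmax' : ∀ j, |a j| ≤ |a i₀| := fun j => hmax j (Finset.mem_univ j)
  have ht := ha (y i₀) (hunit i₀)
  have hself : (∑ k, y i₀ k * y i₀ k) = 1 := by
    rw [← hunit i₀]; exact Finset.sum_congr rfl fun k _ => (sq (y i₀ k)).symm
  rw [← Finset.add_sum_erase _ _ (Finset.mem_univ i₀), hself, one_pow, mul_one] at ht
  have hA : a i₀ = -∑ j ∈ Finset.univ.erase i₀,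
      a j * (∑ k, y j k * y i₀ k) ^ (2 * m) := by linarith
  have hterm : ∀ j ∈ Finset.univ.erase i₀,
      |a j * (∑ k, y j k * y i₀ k) ^ (2 * m)| ≤ |a i₀| * ε := by
    intro j hj
    have hjne : j ≠ i₀ := Finset.ne_of_mem_erase hj
    have hmN : N (j, i₀) ≤ m := by
      have := Finset.le_sup (f := N) (Finset.mem_univ (j, i₀))
      omega
    have hε : |∑ k, y j k * y i₀ k| ^ (2 * m) ≤ ε := hNspec (j, i₀) m hmN hjne
    rw [abs_mul, abs_pow]
    exact mul_le_mul (hmax' j) hε (by positivity) (abs_nonneg _)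
  have hbound : |a i₀| ≤ (Finset.univ.erase i₀).card • (|a i₀| * ε) := by
    calc |a i₀| = |∑ j ∈ Finset.univ.erase i₀,
          a j * (∑ k, y j k * y i₀ k) ^ (2 * m)| := by rw [hA, abs_neg]
      _ ≤ _ := (Finset.abs_sum_le_sum_abs _ _).trans
          (Finset.sum_le_card_nsmul _ _ _ hterm)
  have hcard : ((Finset.univ.erase i₀).card : ℝ) ≤ n := by
    have := Finset.card_erase_le (a := i₀) (s := (Finset.univ : Finset (Fin n)))
    have h2 : (Finset.univ : Finset (Fin n)).card = n := Finset.card_univ.trans (Fintype.card_fin n)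
    exact_mod_cast this.trans_eq h2
  have hA0 : |a i₀| ≤ 0 := by
    have h1 : |a i₀| ≤ (n : ℝ) * (|a i₀| * ε) := by
      rw [nsmul_eq_mul] at hbound
      refine hbound.trans (mul_le_mul_of_nonneg_right hcard (by positivity))
    have h2 : (n : ℝ) * ε ≤ 1 / 2 := by
      rw [hεdef, mul_one_div, div_le_div_iff₀ (by positivity) (by norm_num : (0:ℝ) < 2)]
      nlinarith [Nat.cast_nonneg (α := ℝ) n]
    nlinarith [abs_nonneg (a i₀)]
  have := (hmax' i).trans hA0
  exact abs_nonpos_iff.mp this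
end
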